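/- Let 0 < λ₁ < ... < λₙ be distinct positive reals. Then the n-fold convolution of Laplace densities with parameters λ₁,...,λₙ has density fₙ(x) = ((-1)^{n+1}/2) A(n)² Σ_{i=1}^n e^{-λᵢ|x|}/(λᵢ E(i,n)) for x ∈ ℝ, where A(n) = Π λᵢ and E(k,n) = Π_{i≠k} (λ_k² - λᵢ²). -/

import Mathlib

/-!
Splitting the integral at `0` and `x` gives
`(a/2) e^{-a|·|} ⋆ e^{-b|·|} = a/(b² - a²) · (b e^{-a|x|} - a e^{-b|x|})` for `a ≠ b`,
so by induction the `n`-fold convolution is a combination of the `e^{-λᵢ|x|}`.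
The factor `1 / E(i)` is the Lagrange nodal weight of the node `λᵢ²` among the nodes `λⱼ²`.
In the induction step the new coefficient of `e^{-λ₁|x|}` comes out as minus the sum of
the other nodal weights, which is the nodal weight of `λ₁²` because nodal weights sum to zero.
-/

open MeasureTheory Filter Set

/-- Convolution of two densities on ℝ. -/
noncomputable def convDens (f g : ℝ → ℝ) : ℝ → ℝ := fun x => ∫ y, f y * g (x - y)

/-- n-fold convolution of densities `f 0, …, f n`. -/
noncomputable def convN : (n : ℕ) → (Fin (n + 1) → ℝ → ℝ) → (ℝ → ℝ)
  | 0, f => f 0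
  | n + 1, f => convDens (f 0) (convN n (fun i => f i.succ))

/-- Laplace density with parameter `a`. -/
noncomputable def laplaceDens (a : ℝ) : ℝ → ℝ :=
  fun x => a / 2 * Real.exp (-a * |x|)

open Real

theorem integral_exp_mul {c : ℝ} (hc : c ≠ 0) (a b : ℝ) :
    ∫ x in a..b, exp (c * x) = (exp (c * b) - exp (c * a)) / c := by
  rw [intervalIntegral.integral_comp_mul_left exp hc, integral_exp, smul_eq_mul, inv_mul_eq_div]

theorem integrable_exp_neg_mul_abs {a : ℝ} (ha : 0 < a) :
    Integrable fun y : ℝ => exp (-a * |y|) := by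
  rw [← integrableOn_univ, ← Iic_union_Ioi (a := 0)]
  refine ((integrableOn_exp_mul_Iic ha 0).congr_fun (fun y hy => ?_) measurableSet_Iic).union
    ((integrableOn_exp_mul_Ioi (neg_lt_zero.mpr ha) 0).congr_fun (fun y hy => ?_) measurableSet_Ioi)
  · simp [abs_of_nonpos (mem_Iic.mp hy)]
  · simp [abs_of_pos (mem_Ioi.mp hy)]

theorem integrable_exp_neg_mul_abs_mul_exp_neg_mul_abs_sub {a b : ℝ} (ha : 0 < a) (hb : 0 ≤ b)
    (x : ℝ) : Integrable fun y : ℝ => exp (-a * |y|) * exp (-b * |x - y|) := by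
  refine (integrable_exp_neg_mul_abs ha).mul_bdd (c := 1) (by fun_prop) (.of_forall fun y => ?_)
  rw [norm_of_nonneg (exp_nonneg _), exp_le_one_iff]
  nlinarith [abs_nonneg (x - y)]

theorem integral_exp_neg_mul_abs_mul_exp_neg_mul_abs_sub_of_nonneg {a b : ℝ} (ha : 0 < a)
    (hb : 0 < b) (hab : a ≠ b) {x : ℝ} (hx : 0 ≤ x) :
    ∫ y, exp (-a * |y|) * exp (-b * |x - y|) =
      2 / (b ^ 2 - a ^ 2) * (b * exp (-a * x) - a * exp (-b * x)) := by
  set h : ℝ → ℝ := fun y => exp (-a * |y|) * exp (-b * |x - y|)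
  have hint : Integrable h := integrable_exp_neg_mul_abs_mul_exp_neg_mul_abs_sub ha hb.le x
  have left : ∫ y in Iic 0, h y = exp (-b * x) / (a + b) := by
    rw [setIntegral_congr_fun measurableSet_Iic (g := fun y => exp (-b * x) * exp ((a + b) * y))
      fun y (hy : y ≤ 0) => by
        simp only [h, abs_of_nonpos hy, abs_of_nonneg (by linarith : 0 ≤ x - y), ← exp_add]
        ring_nf,
      integral_const_mul, integral_exp_mul_Iic (by linarith)]
    simp [div_eq_mul_inv]
  have middle : ∫ y in Ioc 0 x, h y = exp (-b * x) * ((exp ((b - a) * x) - 1) / (b - a)) := by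
    rw [setIntegral_congr_fun measurableSet_Ioc (g := fun y => exp (-b * x) * exp ((b - a) * y))
      fun y (hy : 0 < y ∧ y ≤ x) => by
        simp only [h, abs_of_pos hy.1, abs_of_nonneg (by linarith : 0 ≤ x - y), ← exp_add]
        ring_nf,
      integral_const_mul, ← intervalIntegral.integral_of_le hx,
      integral_exp_mul (sub_ne_zero.mpr hab.symm), mul_zero, exp_zero]
  have right : ∫ y in Ioi x, h y = exp (b * x) * (exp (-(a + b) * x) / (a + b)) := by
    rw [setIntegral_congr_fun measurableSet_Ioi (g := fun y => exp (b * x) * exp (-(a + b) * y))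
      fun y (hy : x < y) => by
        simp only [h, abs_of_pos (by linarith : 0 < y), abs_of_neg (by linarith : x - y < 0),
          ← exp_add]
        ring_nf,
      integral_const_mul, integral_exp_mul_Ioi (by linarith), neg_div_neg_eq]
  rw [← intervalIntegral.integral_Iic_add_Ioi hint.integrableOn hint.integrableOn,
    ← Ioc_union_Ioi_eq_Ioi hx, setIntegral_union (Ioc_disjoint_Ioi le_rfl) measurableSet_Ioi
      hint.integrableOn hint.integrableOn, left, middle, right]
  have e1 : exp ((b - a) * x) = exp (-a * x) * exp (b * x) := by rw [← exp_add]; ring_nf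
  have e2 : exp (-(a + b) * x) = exp (-a * x) * exp (-b * x) := by rw [← exp_add]; ring_nf
  have e3 : exp (b * x) = (exp (-b * x))⁻¹ := by rw [neg_mul, exp_neg, inv_inv]
  have hsub : b - a ≠ 0 := sub_ne_zero.mpr hab.symm
  have hsq : b ^ 2 - a ^ 2 = (b - a) * (b + a) := by ring
  rw [e1, e2, e3, hsq]
  field_simp
  ring

theorem integral_exp_neg_mul_abs_mul_exp_neg_mul_abs_sub {a b : ℝ} (ha : 0 < a) (hb : 0 < b)
    (hab : a ≠ b) (x : ℝ) :
    ∫ y, exp (-a * |y|) * exp (-b * |x - y|) =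
      2 / (b ^ 2 - a ^ 2) * (b * exp (-a * |x|) - a * exp (-b * |x|)) := by
  rcases le_or_gt 0 x with hx | hx
  · rw [abs_of_nonneg hx, integral_exp_neg_mul_abs_mul_exp_neg_mul_abs_sub_of_nonneg ha hb hab hx]
  · have hreflect : ∫ y, exp (-a * |y|) * exp (-b * |x - y|) =
        ∫ y, exp (-a * |y|) * exp (-b * |-x - y|) := by
      conv_rhs => rw [← integral_neg_eq_self]
      congr 1 with y
      rw [abs_neg, show -x - -y = -(x - y) by ring, abs_neg]
    rw [hreflect, integral_exp_neg_mul_abs_mul_exp_neg_mul_abs_sub_of_nonneg ha hb hab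
      (neg_nonneg.mpr hx.le), abs_of_neg hx]

theorem convDens_laplaceDens_sum_exp {ι : Type*} (s : Finset ι) {a : ℝ} (ha : 0 < a)
    (b c : ι → ℝ) (hb : ∀ i ∈ s, 0 < b i) (hab : ∀ i ∈ s, a ≠ b i) (x : ℝ) :
    convDens (laplaceDens a) (fun z => ∑ i ∈ s, c i * exp (-b i * |z|)) x =
      ∑ i ∈ s, c i * (a / (b i ^ 2 - a ^ 2) * (b i * exp (-a * |x|) - a * exp (-b i * |x|))) := by
  have hterm : ∀ i ∈ s, ∫ y, laplaceDens a y * (c i * exp (-b i * |x - y|)) =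
      c i * (a / (b i ^ 2 - a ^ 2) * (b i * exp (-a * |x|) - a * exp (-b i * |x|))) := by
    intro i hi
    simp_rw [laplaceDens, mul_mul_mul_comm, integral_const_mul,
      integral_exp_neg_mul_abs_mul_exp_neg_mul_abs_sub ha (hb i hi) (hab i hi)]
    ring
  simp_rw [convDens, Finset.mul_sum]
  rw [integral_finsetSum]
  · exact Finset.sum_congr rfl hterm
  · intro i hi
    simp_rw [laplaceDens, mul_mul_mul_comm]
    exact ((integrable_exp_neg_mul_abs_mul_exp_neg_mul_abs_sub ha (hb i hi).le x).const_mul _)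

namespace Lagrange
open Finset Polynomial

variable {F : Type*} [Field F]

theorem sum_nodalWeight_eq_zero {ι : Type*} [DecidableEq ι] {s : Finset ι} {v : ι → F}
    (hvs : Set.InjOn v s) (hs : 2 ≤ #s) : ∑ i ∈ s, nodalWeight s v i = 0 := by
  -- compare the coefficients of `X ^ (#s - 1)` in `∑ i ∈ s, basis s v i = 1`
  have hbasis : ∀ i ∈ s, (Lagrange.basis s v i).coeff (#s - 1) = nodalWeight s v i := by
    intro i hi
    rw [basis_eq_prod_sub_inv_mul_nodal_div hi, ← nodal_erase_eq_nodal_div hi, coeff_C_mul,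
      ← card_erase_of_mem hi, ← natDegree_nodal (v := v), nodal_monic.coeff_natDegree, mul_one]
  have hsum := congrArg (coeff · (#s - 1)) (sum_basis hvs (card_pos.mp (by omega)))
  simp only [finsetSum_coeff, coeff_one, if_neg (by omega : #s - 1 ≠ 0)] at hsum
  rwa [← sum_congr rfl hbasis]

theorem nodalWeight_univ_succ {n : ℕ} (v : Fin (n + 2) → F) (i : Fin (n + 1)) :
    nodalWeight univ v i.succ = (v i.succ - v 0)⁻¹ * nodalWeight univ (fun j => v j.succ) i := by
  rw [nodalWeight, Fin.univ_succ, cons_eq_insert, erase_insert_of_ne (Fin.succ_ne_zero i).symm,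
    prod_insert (by simp)]
  congr 1
  rw [show i.succ = (⟨Fin.succ, Fin.succ_injective _⟩ : Fin (n + 1) ↪ Fin (n + 2)) i from rfl,
    ← map_erase, prod_map]
  rfl

theorem nodalWeight_univ_zero {n : ℕ} {v : Fin (n + 2) → F} (hv : Function.Injective v) :
    nodalWeight univ v 0 = -∑ i : Fin (n + 1), nodalWeight univ v i.succ := by
  rw [eq_neg_iff_add_eq_zero, ← Fin.sum_univ_succ (f := nodalWeight univ v)]
  exact sum_nodalWeight_eq_zero hv.injOn (by simp)

end Lagrange

open Finset Lagrange

theorem convN_laplaceDens_eq (n : ℕ) (lam : Fin (n + 1) → ℝ) (hpos : ∀ i, 0 < lam i)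
    (hinj : Function.Injective lam) :
    convN n (fun i => laplaceDens (lam i)) = fun x => ∑ i, (-1) ^ n / 2 * (∏ j, lam j) ^ 2 *
      nodalWeight univ (fun k => lam k ^ 2) i / lam i * exp (-lam i * |x|) := by
  induction n with
  | zero =>
    ext x
    simp [convN, laplaceDens, nodalWeight, field]
  | succ n ih =>
    ext x
    have hsq_inj : Function.Injective fun k => lam k ^ 2 := fun i j h =>
      hinj ((pow_left_inj₀ (hpos i).le (hpos j).le two_ne_zero).mp h)
    rw [convN, ih (fun i => lam i.succ) (fun i => hpos _) (hinj.comp (Fin.succ_injective _)),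
      convDens_laplaceDens_sum_exp _ (hpos 0) _ _ (fun i _ => hpos _)
        (fun i _ h => Fin.succ_ne_zero i (hinj h).symm),
      Fin.sum_univ_succ (f := fun i => _ * exp (-lam i * |x|)), nodalWeight_univ_zero hsq_inj]
    simp only [nodalWeight_univ_succ (fun k => lam k ^ 2), Fin.prod_univ_succ (f := lam),
      Finset.mul_sum, mul_neg, ← Finset.sum_neg_distrib, Finset.sum_div, Finset.sum_mul,
      ← Finset.sum_add_distrib]
    refine Finset.sum_congr rfl fun i _ => ?_
    have h0 := (hpos 0).ne'
    have hi := (hpos i.succ).ne'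
    have hdiff : lam i.succ ^ 2 - lam 0 ^ 2 ≠ 0 := sub_ne_zero.mpr (hsq_inj.ne (Fin.succ_ne_zero i))
    field_simp
    ring

/-- The convolution of Laplace densities with distinct parameters
`0 < λ₁ < … < λ_{n+1}` equals
`((-1)^{(n+1)+1}/2) A² Σᵢ e^{-λᵢ |x|} / (λᵢ E i)` for all real `x`. -/
theorem conv_laplace_densities (n : ℕ) (lam : Fin (n + 1) → ℝ)
    (hpos : ∀ i, 0 < lam i) (hmono : StrictMono lam) :
    ∀ x : ℝ,
      convN n (fun i => laplaceDens (lam i)) x =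
        (-1 : ℝ) ^ (n + 2) / 2 * (∏ i, lam i) ^ 2 *
          ∑ i, Real.exp (-lam i * |x|) /
            (lam i * ∏ j ∈ Finset.univ.erase i, ((lam i) ^ 2 - (lam j) ^ 2)) := by
  intro x
  rw [convN_laplaceDens_eq n lam hpos hmono.injective, Finset.mul_sum]
  refine Finset.sum_congr rfl fun i _ => ?_
  rw [nodalWeight, Finset.prod_inv_distrib, pow_add, neg_one_sq]
  ring
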